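/- Let f be a probability density on ℝ with f > 0 on the open interval (a,b), f = 0 outside (a,b), where −∞ < a < b < ∞, and f continuous on (a,b). Fix 0 < λ < 1 and define the convex combination estimator θ_{CC,λ,n} := λ·(min_i x_i − a) + (1−λ)·(max_i x_i − b). Then for every θ ∈ ℝ and every ε with 0 < ε < min{λ, 1−λ}·(b−a), the limits defining the rates exist and β^+(θ_{CC,λ},θ,ε) = −log ∫_{a+ε/λ}^b f(x) dx and β^−(θ_{CC,λ},θ,ε) = −log ∫_a^{b−ε/(1−λ)} f(x) dx. -/

import Mathlib

open MeasureTheory Filter Set Topology ENNReal NNReal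

/-- `-log x`, with the convention `-log 0 = ∞`, as a map `ℝ≥0∞ → ℝ≥0∞`. -/
noncomputable def negLog (x : ℝ≥0∞) : ℝ≥0∞ :=
  if x = 0 then ⊤ else ENNReal.ofReal (-Real.log x.toReal)

/-- The `n`-fold product (i.i.d.) measure of `p`. -/
noncomputable def prodMeas {Ω : Type*} [MeasurableSpace Ω] (p : Measure Ω) (n : ℕ) :
    Measure (Fin n → Ω) :=
  Measure.pi fun _ => p

/-- `β⁺(T,θ,ε) = liminf (-1/n) log p_θ^n { T_n > θ + ε }`. -/
noncomputable def betaPlus {Ω : Type*} [MeasurableSpace Ω] (p : ℝ → Measure Ω)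
    (T : (n : ℕ) → (Fin n → Ω) → ℝ) (θ ε : ℝ) : ℝ≥0∞ :=
  Filter.atTop.liminf fun n : ℕ =>
    negLog (prodMeas (p θ) n {x | θ + ε < T n x}) / (n : ℝ≥0∞)

/-- `β⁻(T,θ,ε) = liminf (-1/n) log p_θ^n { T_n < θ - ε }`. -/
noncomputable def betaMinus {Ω : Type*} [MeasurableSpace Ω] (p : ℝ → Measure Ω)
    (T : (n : ℕ) → (Fin n → Ω) → ℝ) (θ ε : ℝ) : ℝ≥0∞ :=
  Filter.atTop.liminf fun n : ℕ =>
    negLog (prodMeas (p θ) n {x | T n x < θ - ε}) / (n : ℝ≥0∞)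

/-- The location shift family: `p_θ` has density `x ↦ f (x - θ)` w.r.t. Lebesgue measure. -/
noncomputable def locMeasure (f : ℝ → ℝ) (θ : ℝ) : Measure ℝ :=
  volume.withDensity fun x => ENNReal.ofReal (f (x - θ))

/-- The estimator `θ̲_n = min_i x_i - a`. -/
noncomputable def lowEst (a : ℝ) (n : ℕ) (x : Fin n → ℝ) : ℝ := (⨅ i, x i) - a

/-- The estimator `θ̄_n = max_i x_i - b`. -/
noncomputable def highEst (b : ℝ) (n : ℕ) (x : Fin n → ℝ) : ℝ := (⨆ i, x i) - b

/-- The convex combination estimator `θ_{CC,λ,n} = λ(min_i x_i - a) + (1-λ)(max_i x_i - b)`. -/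
noncomputable def ccEst (a b lam : ℝ) (n : ℕ) (x : Fin n → ℝ) : ℝ :=
  lam * ((⨅ i, x i) - a) + (1 - lam) * ((⨆ i, x i) - b)

/-!
Almost surely every observation lies in `(a + θ, b + θ)`. On that event `θ_CC > θ + ε` forces
`min xᵢ > a + θ + ε/λ`, because `max xᵢ < b + θ`; hence `p_θⁿ{θ_CC > θ + ε} ≤ qⁿ` with
`q = p_θ(a + θ + ε/λ, ∞)`. Conversely, for `δ > 0` the event contains the rectangle on which
`x₀ > b + θ - λδ` and every `xᵢ > a + θ + ε/λ + (1-λ)δ`: the gain `λ(1-λ)δ` on the minimum term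
offsets the loss `(1-λ)λδ` on the maximum term. The rectangle has probability `c_δ t_δⁿ⁻¹` with
`c_δ > 0` since `f > 0` near `b`, so the rate is at most `-log t_δ`, and `t_δ → q` as `δ → 0` by
continuity of measure. The lower tail is the mirror image, with the roles of `a` and `b` swapped.
-/

lemma negLog_eq_toENNReal_neg_log (x : ℝ≥0∞) : negLog x = (-ENNReal.log x).toENNReal := by
  rcases eq_or_ne x 0 with rfl | hx0
  · simp [negLog]
  rcases eq_or_ne x ⊤ with rfl | hxt
  · simp [negLog]
  rw [negLog, if_neg hx0, ENNReal.log_pos_real hx0 hxt, ← EReal.coe_neg,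
    EReal.toENNReal_of_ne_top (EReal.coe_ne_top _), EReal.toReal_coe]

lemma negLog_antitone : Antitone negLog := fun x y hxy => by
  simp only [negLog_eq_toENNReal_neg_log]
  exact EReal.toENNReal_le_toENNReal (EReal.neg_le_neg_iff.2 (ENNReal.log_monotone hxy))

lemma continuous_negLog : Continuous negLog := by
  simp only [funext negLog_eq_toENNReal_neg_log]
  exact EReal.continuous_toENNReal.comp (continuous_neg.comp ENNReal.continuous_log)

lemma negLog_ne_top {x : ℝ≥0∞} (hx : x ≠ 0) : negLog x ≠ ⊤ := by
  simp [negLog, hx]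

lemma negLog_pow (x : ℝ≥0∞) (n : ℕ) : negLog (x ^ n) = n * negLog x := by
  rw [negLog_eq_toENNReal_neg_log, negLog_eq_toENNReal_neg_log, ENNReal.log_pow, ← mul_neg,
    EReal.toENNReal_mul (by exact_mod_cast n.zero_le), EReal.toENNReal_of_ne_top (EReal.natCast_ne_top n), ← EReal.coe_coe_eq_natCast,
    EReal.toReal_coe, ENNReal.ofReal_natCast]

lemma negLog_mul {x y : ℝ≥0∞} (hx : x ≤ 1) (hy : y ≤ 1) :
    negLog (x * y) = negLog x + negLog y := by
  have hx' := ENNReal.log_le_zero_iff.2 hx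
  have hy' := ENNReal.log_le_zero_iff.2 hy
  rw [negLog_eq_toENNReal_neg_log, negLog_eq_toENNReal_neg_log, negLog_eq_toENNReal_neg_log,
    ENNReal.log_mul_add, EReal.neg_add (Or.inr (ne_top_of_le_ne_top EReal.zero_ne_top hy'))
      (Or.inl (ne_top_of_le_ne_top EReal.zero_ne_top hx')), sub_eq_add_neg]
  exact EReal.toENNReal_add (EReal.neg_nonneg.2 hx') (EReal.neg_nonneg.2 hy')

lemma le_liminf_negLog_div {μ : ℕ → ℝ≥0∞} {q : ℝ≥0∞} (h : ∀ n, μ n ≤ q ^ n) :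
    negLog q ≤ atTop.liminf fun n => negLog (μ n) / n := by
  refine le_liminf_of_le (by isBoundedDefault) ?_
  filter_upwards [eventually_ne_atTop 0] with n hn
  rw [ENNReal.le_div_iff_mul_le (by simp [hn]) (by simp), mul_comm, ← negLog_pow]
  exact negLog_antitone (h n)

lemma limsup_negLog_div_le {μ : ℕ → ℝ≥0∞} {c t : ℝ≥0∞} (hc : c ≠ 0) (hc1 : c ≤ 1)
    (ht1 : t ≤ 1) (h : ∀ m, c * t ^ m ≤ μ (m + 1)) :
    atTop.limsup (fun n => negLog (μ n) / n) ≤ negLog t := by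
  have hbound : ∀ m : ℕ, negLog (μ (m + 1)) / (m + 1 : ℕ) ≤ negLog c / (m + 1 : ℕ) + negLog t := by
    intro m
    calc negLog (μ (m + 1)) / (m + 1 : ℕ)
        ≤ negLog (c * t ^ m) / (m + 1 : ℕ) := by gcongr; exact negLog_antitone (h m)
      _ = negLog c / (m + 1 : ℕ) + m * negLog t / (m + 1 : ℕ) := by
        rw [negLog_mul hc1 (pow_le_one₀ zero_le ht1), negLog_pow, ENNReal.add_div]
      _ ≤ negLog c / (m + 1 : ℕ) + negLog t := by
        gcongr
        refine ENNReal.div_le_of_le_mul ?_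
        rw [mul_comm]
        gcongr
        exact_mod_cast m.le_succ
  have hlim : Tendsto (fun n : ℕ => negLog c / n + negLog t) atTop (𝓝 (negLog t)) := by
    simpa [div_eq_mul_inv] using (ENNReal.Tendsto.const_mul ENNReal.tendsto_inv_nat_nhds_zero
      (Or.inr (negLog_ne_top hc))).add_const (negLog t)
  calc atTop.limsup (fun n => negLog (μ n) / n)
      ≤ atTop.limsup (fun n : ℕ => negLog c / n + negLog t) := by
        refine limsup_le_limsup ?_
        filter_upwards [eventually_ne_atTop 0] with n hn
        obtain ⟨m, rfl⟩ := Nat.exists_eq_succ_of_ne_zero hn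
        exact hbound m
    _ = negLog t := hlim.limsup_eq

lemma tendsto_negLog_div {μ : ℕ → ℝ≥0∞} {q : ℝ≥0∞} (hup : ∀ n, μ n ≤ q ^ n)
    {c t : ℕ → ℝ≥0∞} (hc : ∀ k, c k ≠ 0) (hc1 : ∀ k, c k ≤ 1) (ht1 : ∀ k, t k ≤ 1)
    (ht : Tendsto t atTop (𝓝 q)) (hlow : ∀ k m, c k * t k ^ m ≤ μ (m + 1)) :
    Tendsto (fun n => negLog (μ n) / n) atTop (𝓝 (negLog q)) :=
  tendsto_of_le_liminf_of_limsup_le (le_liminf_negLog_div hup)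
    (ge_of_tendsto' ((continuous_negLog.tendsto q).comp ht) fun k =>
      limsup_negLog_div_le (hc k) (hc1 k) (ht1 k) (hlow k))

section Product

variable {Ω : Type*} [MeasurableSpace Ω] {P : Measure Ω}

lemma prodMeas_le_pow [SigmaFinite P] {G S : Set Ω} (hG : ∀ᵐ ω ∂P, ω ∈ G) {n : ℕ}
    {E : Set (Fin n → Ω)} (hE : ∀ x ∈ E, (∀ i, x i ∈ G) → ∀ i, x i ∈ S) :
    prodMeas P n E ≤ P S ^ n := by
  have hall : ∀ᵐ x ∂prodMeas P n, ∀ i, x i ∈ G :=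
    ae_all_iff.2 fun i => (Measure.quasiMeasurePreserving_eval _ i).ae hG
  calc prodMeas P n E ≤ prodMeas P n (univ.pi fun _ => S) :=
        measure_mono_ae (hall.mono fun x hx hxE => mem_univ_pi.2 (hE x hxE hx))
    _ = P S ^ n := by simp [prodMeas, Measure.pi_pi]

lemma mul_pow_le_prodMeas [SigmaFinite P] {C T : Set Ω} (hCT : C ⊆ T) {m : ℕ}
    {E : Set (Fin (m + 1) → Ω)} (hE : ∀ x : Fin (m + 1) → Ω, x 0 ∈ C → (∀ i, x i ∈ T) → x ∈ E) :
    P C * P T ^ m ≤ prodMeas P (m + 1) E := by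
  calc P C * P T ^ m = prodMeas P (m + 1) (univ.pi (Fin.cons C fun _ => T)) := by
        simp [prodMeas, Measure.pi_pi, Fin.prod_univ_succ]
    _ ≤ prodMeas P (m + 1) E := measure_mono fun x hx => by
        simp only [mem_univ_pi, Fin.forall_fin_succ, Fin.cons_zero, Fin.cons_succ] at hx
        exact hE x hx.1 (Fin.cases (hCT hx.1) hx.2)

theorem tendsto_negLog_prodMeas_div [IsProbabilityMeasure P] {E : ∀ n, Set (Fin n → Ω)}
    {G S : Set Ω} (hG : ∀ᵐ ω ∂P, ω ∈ G) (hup : ∀ n, ∀ x ∈ E n, (∀ i, x i ∈ G) → ∀ i, x i ∈ S)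
    {C T : ℕ → Set Ω} (hC : ∀ k, P (C k) ≠ 0) (hCT : ∀ k, C k ⊆ T k)
    (hT : Tendsto (fun k => P (T k)) atTop (𝓝 (P S)))
    (hlow : ∀ k m (x : Fin (m + 1) → Ω), x 0 ∈ C k → (∀ i, x i ∈ T k) → x ∈ E (m + 1)) :
    Tendsto (fun n : ℕ => negLog (prodMeas P n (E n)) / n) atTop (𝓝 (negLog (P S))) :=
  tendsto_negLog_div (fun n => prodMeas_le_pow hG (hup n)) hC (fun _ => prob_le_one)
    (fun _ => prob_le_one) hT fun k m => mul_pow_le_prodMeas (hCT k) (hlow k m)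

end Product

lemma tendsto_measure_Ioi_of_antitone (μ : Measure ℝ) {u : ℕ → ℝ} {c : ℝ} (hu : Antitone u)
    (huc : Tendsto u atTop (𝓝 c)) : Tendsto (fun k => μ (Ioi (u k))) atTop (𝓝 (μ (Ioi c))) := by
  have hunion : ⋃ k, Ioi (u k) = Ioi c := by
    refine Subset.antisymm (iUnion_subset fun k => Ioi_subset_Ioi (hu.le_of_tendsto huc k))
      fun x hx => ?_
    obtain ⟨k, hk⟩ := (huc.eventually (gt_mem_nhds hx)).exists
    exact mem_iUnion.2 ⟨k, hk⟩
  rw [← hunion]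
  exact tendsto_measure_iUnion_atTop fun j k hjk => Ioi_subset_Ioi (hu hjk)

lemma tendsto_measure_Iio_of_monotone (μ : Measure ℝ) {u : ℕ → ℝ} {c : ℝ} (hu : Monotone u)
    (huc : Tendsto u atTop (𝓝 c)) : Tendsto (fun k => μ (Iio (u k))) atTop (𝓝 (μ (Iio c))) := by
  have hunion : ⋃ k, Iio (u k) = Iio c := by
    refine Subset.antisymm (iUnion_subset fun k => Iio_subset_Iio (hu.ge_of_tendsto huc k))
      fun x hx => ?_
    obtain ⟨k, hk⟩ := (huc.eventually (lt_mem_nhds hx)).exists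
    exact mem_iUnion.2 ⟨k, hk⟩
  rw [← hunion]
  exact tendsto_measure_iUnion_atTop fun j k hjk => Iio_subset_Iio (hu hjk)

section Geometry

variable {a b lam θ ε : ℝ}

lemma lt_of_lt_ccEst (hlam0 : 0 < lam) (hlam1 : lam ≤ 1) {n : ℕ} {x : Fin n → ℝ}
    (hx : ∀ i, x i < b + θ) (h : θ + ε < ccEst a b lam n x) (i : Fin n) :
    a + ε / lam + θ < x i := by
  have : Nonempty (Fin n) := ⟨i⟩
  obtain ⟨j, hj⟩ := exists_eq_ciSup_of_finite (f := x)
  have hmax : (1 - lam) * ((⨆ k, x k) - b) ≤ (1 - lam) * θ :=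
    mul_le_mul_of_nonneg_left (by linarith [hj ▸ hx j]) (by linarith)
  have hmin : lam * ((⨅ k, x k) - a) ≤ lam * (x i - a) :=
    mul_le_mul_of_nonneg_left (by linarith [ciInf_le (Finite.bddBelow_range x) i]) hlam0.le
  have : ε / lam < x i - a - θ := by
    rw [div_lt_iff₀ hlam0]
    unfold ccEst at h
    linarith
  linarith

lemma lt_ccEst_of_lt (hlam0 : 0 < lam) (hlam1 : lam ≤ 1) {m : ℕ} {x : Fin (m + 1) → ℝ} {δ : ℝ}
    (h0 : b + θ - lam * δ < x 0) (hx : ∀ i, a + ε / lam + θ + (1 - lam) * δ < x i) :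
    θ + ε < ccEst a b lam (m + 1) x := by
  obtain ⟨j, hj⟩ := exists_eq_ciInf_of_finite (f := x)
  have hmin : lam * (ε / lam + θ + (1 - lam) * δ) < lam * ((⨅ k, x k) - a) :=
    mul_lt_mul_of_pos_left (by linarith [hj ▸ hx j]) hlam0
  have hmax : (1 - lam) * (θ - lam * δ) ≤ (1 - lam) * ((⨆ k, x k) - b) :=
    mul_le_mul_of_nonneg_left (by linarith [le_ciSup (Finite.bddAbove_range x) 0]) (by linarith)
  have hε : lam * (ε / lam) = ε := mul_div_cancel₀ ε hlam0.ne'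
  unfold ccEst
  linarith

lemma lt_of_ccEst_lt (hlam0 : 0 ≤ lam) (hlam1 : lam < 1) {n : ℕ} {x : Fin n → ℝ}
    (hx : ∀ i, a + θ < x i) (h : ccEst a b lam n x < θ - ε) (i : Fin n) :
    x i < b - ε / (1 - lam) + θ := by
  have : Nonempty (Fin n) := ⟨i⟩
  obtain ⟨j, hj⟩ := exists_eq_ciInf_of_finite (f := x)
  have hmin : lam * θ ≤ lam * ((⨅ k, x k) - a) :=
    mul_le_mul_of_nonneg_left (by linarith [hj ▸ hx j]) hlam0
  have hmax : (1 - lam) * (x i - b) ≤ (1 - lam) * ((⨆ k, x k) - b) :=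
    mul_le_mul_of_nonneg_left (by linarith [le_ciSup (Finite.bddAbove_range x) i]) (by linarith)
  have : ε / (1 - lam) < b + θ - x i := by
    rw [div_lt_iff₀ (by linarith)]
    unfold ccEst at h
    linarith
  linarith

lemma ccEst_lt_of_lt (hlam0 : 0 ≤ lam) (hlam1 : lam < 1) {m : ℕ} {x : Fin (m + 1) → ℝ} {δ : ℝ}
    (h0 : x 0 < a + θ + (1 - lam) * δ) (hx : ∀ i, x i < b - ε / (1 - lam) + θ - lam * δ) :
    ccEst a b lam (m + 1) x < θ - ε := by
  obtain ⟨j, hj⟩ := exists_eq_ciSup_of_finite (f := x)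
  have hmin : lam * ((⨅ k, x k) - a) ≤ lam * (θ + (1 - lam) * δ) :=
    mul_le_mul_of_nonneg_left (by linarith [ciInf_le (Finite.bddBelow_range x) 0]) hlam0
  have hmax : (1 - lam) * ((⨆ k, x k) - b) < (1 - lam) * (θ - ε / (1 - lam) - lam * δ) :=
    mul_lt_mul_of_pos_left (by linarith [hj ▸ hx j]) (by linarith)
  have hε : (1 - lam) * (ε / (1 - lam)) = ε := mul_div_cancel₀ ε (by linarith)
  unfold ccEst
  linarith

end Geometry

section Rates

variable {P : Measure ℝ} [IsProbabilityMeasure P] {a b lam θ ε : ℝ}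

theorem tendsto_negLog_prodMeas_lt_ccEst (hlam0 : 0 < lam) (hlam1 : lam ≤ 1)
    (hsupp : ∀ᵐ x ∂P, x < b + θ) (hpos : ∀ u < b + θ, P (Ioi u) ≠ 0)
    (hs : a + ε / lam + θ < b + θ) :
    Tendsto (fun n : ℕ => negLog (prodMeas P n {x | θ + ε < ccEst a b lam n x}) / n) atTop
      (𝓝 (negLog (P (Ioi (a + ε / lam + θ))))) := by
  obtain ⟨δ, hδ_anti, hδ_mem, hδ⟩ := exists_seq_strictAnti_tendsto' (sub_pos.2 hs)
  have hT : Tendsto (fun k => P (Ioi (a + ε / lam + θ + (1 - lam) * δ k))) atTop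
      (𝓝 (P (Ioi (a + ε / lam + θ)))) :=
    tendsto_measure_Ioi_of_antitone P (fun j k hjk => by nlinarith [hδ_anti.antitone hjk])
      (by simpa using (hδ.const_mul (1 - lam)).const_add (a + ε / lam + θ))
  exact tendsto_negLog_prodMeas_div (G := Iio (b + θ)) (C := fun k => Ioi (b + θ - lam * δ k))
    hsupp (fun n x hx hxG => lt_of_lt_ccEst hlam0 hlam1 hxG hx)
    (fun k => hpos _ (by nlinarith [(hδ_mem k).1]))
    (fun k => Ioi_subset_Ioi (by nlinarith [(hδ_mem k).2])) hT
    (fun k m x h0 hx => lt_ccEst_of_lt hlam0 hlam1 h0 hx)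

theorem tendsto_negLog_prodMeas_ccEst_lt (hlam0 : 0 ≤ lam) (hlam1 : lam < 1)
    (hsupp : ∀ᵐ x ∂P, a + θ < x) (hpos : ∀ u > a + θ, P (Iio u) ≠ 0)
    (hs : a + θ < b - ε / (1 - lam) + θ) :
    Tendsto (fun n : ℕ => negLog (prodMeas P n {x | ccEst a b lam n x < θ - ε}) / n) atTop
      (𝓝 (negLog (P (Iio (b - ε / (1 - lam) + θ))))) := by
  obtain ⟨δ, hδ_anti, hδ_mem, hδ⟩ := exists_seq_strictAnti_tendsto' (sub_pos.2 hs)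
  have hT : Tendsto (fun k => P (Iio (b - ε / (1 - lam) + θ - lam * δ k))) atTop
      (𝓝 (P (Iio (b - ε / (1 - lam) + θ)))) :=
    tendsto_measure_Iio_of_monotone P (fun j k hjk => by nlinarith [hδ_anti.antitone hjk])
      (by simpa using (hδ.const_mul lam).const_sub (b - ε / (1 - lam) + θ))
  exact tendsto_negLog_prodMeas_div (G := Ioi (a + θ))
    (C := fun k => Iio (a + θ + (1 - lam) * δ k))
    hsupp (fun n x hx hxG => lt_of_ccEst_lt hlam0 hlam1 hxG hx)
    (fun k => hpos _ (by nlinarith [(hδ_mem k).1]))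
    (fun k => Iio_subset_Iio (by nlinarith [(hδ_mem k).2])) hT
    (fun k m x h0 hx => ccEst_lt_of_lt hlam0 hlam1 h0 hx)

end Rates

section LocationFamily

variable {f : ℝ → ℝ} {a b : ℝ}

lemma isProbabilityMeasure_locMeasure (hf0 : ∀ x, 0 ≤ f x) (hf_int : ∫ x, f x = 1) (θ : ℝ) :
    IsProbabilityMeasure (locMeasure f θ) := by
  constructor
  rw [locMeasure, withDensity_apply _ MeasurableSet.univ, Measure.restrict_univ,
    lintegral_sub_right_eq_self (fun x => ENNReal.ofReal (f x)) θ,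
    ← ofReal_integral_eq_lintegral_ofReal (integrable_of_integral_eq_one hf_int)
      (ae_of_all _ hf0), hf_int, ENNReal.ofReal_one]

lemma locMeasure_Ioo (hf : Measurable f) (hf0 : ∀ x, 0 ≤ f x) (hfi : Integrable f) (θ : ℝ)
    {u v : ℝ} (huv : u ≤ v) :
    locMeasure f θ (Ioo (u + θ) (v + θ)) = ENNReal.ofReal (∫ x in u..v, f x) := by
  rw [locMeasure, withDensity_apply _ measurableSet_Ioo, ← preimage_sub_const_Ioo,
    (measurePreserving_sub_right volume θ).setLIntegral_comp_preimage measurableSet_Ioo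
      hf.ennreal_ofReal, intervalIntegral.integral_of_le huv, integral_Ioc_eq_integral_Ioo,
    ofReal_integral_eq_lintegral_ofReal hfi.integrableOn (ae_of_all _ hf0)]

lemma ae_mem_Ioo_locMeasure (hf : Measurable f) (hf_zero : ∀ x ∉ Ioo a b, f x = 0) (θ : ℝ) :
    ∀ᵐ x ∂locMeasure f θ, x ∈ Ioo (a + θ) (b + θ) := by
  refine (ae_withDensity_iff (by fun_prop)).2 (ae_of_all _ fun x hx => ?_)
  have : x - θ ∈ Ioo a b := by_contra fun h => hx (by simp [hf_zero _ h])
  exact ⟨by linarith [this.1], by linarith [this.2]⟩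

lemma locMeasure_ne_zero (hf : Measurable f) (hf_pos : ∀ x ∈ Ioo a b, 0 < f x) {θ : ℝ}
    {s : Set ℝ} (hs : IsOpen s) (hne : (s ∩ Ioo (a + θ) (b + θ)).Nonempty) :
    locMeasure f θ s ≠ 0 := by
  rw [locMeasure, Ne, withDensity_apply_eq_zero (by fun_prop)]
  refine fun h => (hs.inter isOpen_Ioo).measure_ne_zero volume hne (measure_mono_null ?_ h)
  refine fun x hx => ⟨?_, hx.1⟩
  simpa using hf_pos (x - θ) ⟨by linarith [hx.2.1], by linarith [hx.2.2]⟩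

lemma locMeasure_Ioi_ne_zero (hf : Measurable f) (hf_pos : ∀ x ∈ Ioo a b, 0 < f x) (hab : a < b)
    {θ u : ℝ} (hu : u < b + θ) : locMeasure f θ (Ioi u) ≠ 0 :=
  locMeasure_ne_zero hf hf_pos isOpen_Ioi <| (nonempty_Ioo.2 (max_lt hu (by linarith))).mono
    fun _ hx => ⟨(max_lt_iff.1 hx.1).1, (max_lt_iff.1 hx.1).2, hx.2⟩

lemma locMeasure_Iio_ne_zero (hf : Measurable f) (hf_pos : ∀ x ∈ Ioo a b, 0 < f x) (hab : a < b)
    {θ u : ℝ} (hu : a + θ < u) : locMeasure f θ (Iio u) ≠ 0 :=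
  locMeasure_ne_zero hf hf_pos isOpen_Iio <| (nonempty_Ioo.2 (lt_min hu (by linarith))).mono
    fun _ hx => ⟨(lt_min_iff.1 hx.2).1, hx.1, (lt_min_iff.1 hx.2).2⟩

lemma locMeasure_Ioi (hf : Measurable f) (hf0 : ∀ x, 0 ≤ f x) (hfi : Integrable f)
    (hf_zero : ∀ x ∉ Ioo a b, f x = 0) (θ : ℝ) {u : ℝ} (hub : u ≤ b) :
    locMeasure f θ (Ioi (u + θ)) = ENNReal.ofReal (∫ x in u..b, f x) := by
  rw [← locMeasure_Ioo hf hf0 hfi θ hub]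
  exact measure_congr <| (ae_mem_Ioo_locMeasure hf hf_zero θ).mono fun x hx =>
    propext ⟨fun h => ⟨h, hx.2⟩, fun h => h.1⟩

lemma locMeasure_Iio (hf : Measurable f) (hf0 : ∀ x, 0 ≤ f x) (hfi : Integrable f)
    (hf_zero : ∀ x ∉ Ioo a b, f x = 0) (θ : ℝ) {v : ℝ} (hav : a ≤ v) :
    locMeasure f θ (Iio (v + θ)) = ENNReal.ofReal (∫ x in a..v, f x) := by
  rw [← locMeasure_Ioo hf hf0 hfi θ hav]
  exact measure_congr <| (ae_mem_Ioo_locMeasure hf hf_zero θ).mono fun x hx =>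
    propext ⟨fun h => ⟨hx.1, h⟩, fun h => h.2⟩

end LocationFamily

theorem stmt11_general (f : ℝ → ℝ) (a b : ℝ) (hab : a < b)
    (hf_meas : Measurable f)
    (hf_pos : ∀ x ∈ Ioo a b, 0 < f x) (hf_zero : ∀ x ∉ Ioo a b, f x = 0)
    (hf_int : ∫ x, f x = 1)
    (lam : ℝ) (hlam : lam ∈ Ioo (0 : ℝ) 1)
    (θ ε : ℝ) (hεb : ε < min lam (1 - lam) * (b - a)) :
    Tendsto (fun n : ℕ =>
        negLog (prodMeas (locMeasure f θ) n {x | θ + ε < ccEst a b lam n x}) / (n : ℝ≥0∞))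
      atTop (𝓝 (negLog (ENNReal.ofReal (∫ x in (a + ε / lam)..b, f x)))) ∧
    Tendsto (fun n : ℕ =>
        negLog (prodMeas (locMeasure f θ) n {x | ccEst a b lam n x < θ - ε}) / (n : ℝ≥0∞))
      atTop (𝓝 (negLog (ENNReal.ofReal (∫ x in a..(b - ε / (1 - lam)), f x)))) ∧
    betaPlus (locMeasure f) (ccEst a b lam) θ ε
        = negLog (ENNReal.ofReal (∫ x in (a + ε / lam)..b, f x)) ∧
    betaMinus (locMeasure f) (ccEst a b lam) θ ε
        = negLog (ENNReal.ofReal (∫ x in a..(b - ε / (1 - lam)), f x)) := by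
  obtain ⟨hlam0, hlam1⟩ := hlam
  have hf0 : ∀ x, 0 ≤ f x := fun x => by
    by_cases hx : x ∈ Ioo a b
    exacts [(hf_pos x hx).le, (hf_zero x hx).ge]
  have hfi : Integrable f := integrable_of_integral_eq_one hf_int
  have := isProbabilityMeasure_locMeasure hf0 hf_int θ
  have hsupp := ae_mem_Ioo_locMeasure hf_meas hf_zero θ
  have hε_lam : ε / lam < b - a := by
    rw [div_lt_iff₀ hlam0]
    nlinarith [min_le_left lam (1 - lam)]
  have hε_one_sub_lam : ε / (1 - lam) < b - a := by
    rw [div_lt_iff₀ (by linarith)]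
    nlinarith [min_le_right lam (1 - lam)]
  have hplus := tendsto_negLog_prodMeas_lt_ccEst hlam0 hlam1.le (hsupp.mono fun x hx => hx.2)
    (fun u => locMeasure_Ioi_ne_zero hf_meas hf_pos hab) (by linarith : a + ε / lam + θ < b + θ)
  have hminus := tendsto_negLog_prodMeas_ccEst_lt hlam0.le hlam1 (hsupp.mono fun x hx => hx.1)
    (fun u => locMeasure_Iio_ne_zero hf_meas hf_pos hab)
    (by linarith : a + θ < b - ε / (1 - lam) + θ)
  rw [locMeasure_Ioi hf_meas hf0 hfi hf_zero θ (by linarith)] at hplus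
  rw [locMeasure_Iio hf_meas hf0 hfi hf_zero θ (by linarith)] at hminus
  exact ⟨hplus, hminus, hplus.liminf_eq, hminus.liminf_eq⟩

/-- Lemma 2 of Section 5 of the paper: for a density `f` supported exactly on `(a,b)` and
continuous there, the convex combination estimator satisfies, for
`0 < ε < min{λ,1-λ}(b-a)`, that the limits defining its rates exist with
`β⁺(θ_{CC,λ},θ,ε) = -log ∫_{a+ε/λ}^b f` and `β⁻(θ_{CC,λ},θ,ε) = -log ∫_a^{b-ε/(1-λ)} f`. -/
theorem stmt11 (f : ℝ → ℝ) (a b : ℝ) (hab : a < b)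
    (hf_meas : Measurable f)
    (hf_pos : ∀ x ∈ Ioo a b, 0 < f x) (hf_zero : ∀ x ∉ Ioo a b, f x = 0)
    (hf_cont : ContinuousOn f (Ioo a b))
    (hf_int : ∫ x, f x = 1)
    (lam : ℝ) (hlam : lam ∈ Ioo (0 : ℝ) 1)
    (θ ε : ℝ) (hε : 0 < ε) (hεb : ε < min lam (1 - lam) * (b - a)) :
    Tendsto (fun n : ℕ =>
        negLog (prodMeas (locMeasure f θ) n {x | θ + ε < ccEst a b lam n x}) / (n : ℝ≥0∞))
      atTop (𝓝 (negLog (ENNReal.ofReal (∫ x in (a + ε / lam)..b, f x)))) ∧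
    Tendsto (fun n : ℕ =>
        negLog (prodMeas (locMeasure f θ) n {x | ccEst a b lam n x < θ - ε}) / (n : ℝ≥0∞))
      atTop (𝓝 (negLog (ENNReal.ofReal (∫ x in a..(b - ε / (1 - lam)), f x)))) ∧
    betaPlus (locMeasure f) (ccEst a b lam) θ ε
        = negLog (ENNReal.ofReal (∫ x in (a + ε / lam)..b, f x)) ∧
    betaMinus (locMeasure f) (ccEst a b lam) θ ε
        = negLog (ENNReal.ofReal (∫ x in a..(b - ε / (1 - lam)), f x)) :=
  stmt11_general f a b hab hf_meas hf_pos hf_zero hf_int lam hlam θ ε hεb
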